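/- arXiv:2412.11759 — 2 statements merged into one kernel-verified Lean document; each statement's English description precedes it below -/
import Mathlib

section
/- Every circuit C of D(M_1,M_2) can be written as a disjoint union C = I_1 ⊔ I_2 where I_1 is a basis of the restriction M_1|C and I_2 is a basis of the restriction M_2|C. -/
open Finset

/-- A matroid on the ground set `Fin n`, presented by its rank function. -/
structure FinMatroid (n : ℕ) where
  rank : Finset (Fin n) → ℕ
  rank_empty : rank ∅ = 0
  rank_le_card : ∀ S : Finset (Fin n), rank S ≤ S.card
  rank_mono : ∀ ⦃S T : Finset (Fin n)⦄, S ⊆ T → rank S ≤ rank T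
  rank_submod : ∀ S T : Finset (Fin n),
    rank (S ∪ T) + rank (S ∩ T) ≤ rank S + rank T

namespace FinMatroid

variable {n : ℕ}

/-- A set is independent if its rank equals its cardinality. -/
def Indep (M : FinMatroid n) (I : Finset (Fin n)) : Prop := M.rank I = I.card

/-- The rank of the matroid (rank of the full ground set). -/
def rk (M : FinMatroid n) : ℕ := M.rank Finset.univ

/-- A matroid is loopless if every singleton has positive rank. -/
def Loopless (M : FinMatroid n) : Prop := ∀ i : Fin n, 0 < M.rank {i}

/-- Two matroids on `[n]` have no common loops. -/
def NoCommonLoops (M₁ M₂ : FinMatroid n) : Prop :=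
  ∀ i : Fin n, 0 < M₁.rank {i} ∨ 0 < M₂.rank {i}

/-- A valid family for the Dilworth minimum: pairwise disjoint nonempty
subsets of `S`. -/
def ValidFamily (S : Finset (Fin n)) (𝒯 : Finset (Finset (Fin n))) : Prop :=
  (∀ T ∈ 𝒯, T ⊆ S ∧ T.Nonempty) ∧
    ∀ T ∈ 𝒯, ∀ T' ∈ 𝒯, T ≠ T' → Disjoint T T'

/-- The value `Σ_i (rank_{M₁}(T_i) + rank_{M₂}(T_i) − 1) + |S \ ∪ T_i|`
associated to a family. -/
def famValue (M₁ M₂ : FinMatroid n) (S : Finset (Fin n))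
    (𝒯 : Finset (Finset (Fin n))) : ℕ :=
  (∑ T ∈ 𝒯, (M₁.rank T + M₂.rank T - 1)) + (S \ 𝒯.sup id).card

/-- The rank function of the diagonal Dilworth truncation `D(M₁,M₂)`. -/
noncomputable def rankD (M₁ M₂ : FinMatroid n) (S : Finset (Fin n)) : ℕ :=
  sInf {v : ℕ | ∃ 𝒯 : Finset (Finset (Fin n)),
    ValidFamily S 𝒯 ∧ v = famValue M₁ M₂ S 𝒯}

/-- Independence in the diagonal Dilworth truncation. -/
def IndepD (M₁ M₂ : FinMatroid n) (I : Finset (Fin n)) : Prop :=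
  rankD M₁ M₂ I = I.card

/-- Circuits of the diagonal Dilworth truncation: minimal dependent sets. -/
def CircuitD (M₁ M₂ : FinMatroid n) (C : Finset (Fin n)) : Prop :=
  ¬ IndepD M₁ M₂ C ∧ ∀ C' : Finset (Fin n), C' ⊂ C → IndepD M₁ M₂ C'

end FinMatroid

namespace FinMatroid
variable {n : ℕ}


lemma rank_union_le_card_add (M : FinMatroid n) (T U : Finset (Fin n)) :
    M.rank (T ∪ U) ≤ T.card + M.rank U := by
  have h := M.rank_submod T U
  have h2 := M.rank_le_card T
  omega

def contract (M : FinMatroid n) (U : Finset (Fin n)) : FinMatroid n where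
  rank T := M.rank (T ∪ U) - M.rank U
  rank_empty := by simp
  rank_le_card T := by
    show M.rank (T ∪ U) - M.rank U ≤ T.card
    have := M.rank_union_le_card_add T U; omega
  rank_mono := by
    intro S T hST
    show M.rank (S ∪ U) - M.rank U ≤ M.rank (T ∪ U) - M.rank U
    have := M.rank_mono (Finset.union_subset_union_left hST (t := U))
    omega
  rank_submod S T := by
    have h := M.rank_submod (S ∪ U) (T ∪ U)
    have e1 : (S ∪ U) ∪ (T ∪ U) = (S ∪ T) ∪ U := by ext x; simp; tauto
    have e2 : (S ∩ T) ∪ U ⊆ (S ∪ U) ∩ (T ∪ U) := by intro x; simp; tauto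
    have h2 := M.rank_mono e2
    have m1 : M.rank U ≤ M.rank (S ∪ U) := M.rank_mono Finset.subset_union_right
    have m2 : M.rank U ≤ M.rank (T ∪ U) := M.rank_mono Finset.subset_union_right
    have m3 : M.rank U ≤ M.rank ((S ∩ T) ∪ U) := M.rank_mono Finset.subset_union_right
    rw [e1] at h
    show M.rank ((S ∪ T) ∪ U) - M.rank U + (M.rank ((S ∩ T) ∪ U) - M.rank U) ≤
      (M.rank (S ∪ U) - M.rank U) + (M.rank (T ∪ U) - M.rank U)
    have m0 : M.rank U ≤ M.rank ((S ∪ T) ∪ U) := M.rank_mono Finset.subset_union_right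
    have s1 := Nat.sub_add_cancel m1
    have s2 := Nat.sub_add_cancel m2
    have s3 := Nat.sub_add_cancel m3
    omega

lemma contract_rank (M : FinMatroid n) (U T : Finset (Fin n)) :
    (M.contract U).rank T + M.rank U = M.rank (T ∪ U) := by
  have : M.rank U ≤ M.rank (T ∪ U) := M.rank_mono Finset.subset_union_right
  show M.rank (T ∪ U) - M.rank U + M.rank U = M.rank (T ∪ U)
  omega

lemma indep_union_of_contract (M : FinMatroid n) {U J I : Finset (Fin n)}
    (hJU : J ⊆ U) (hJ : M.rank J = J.card) (hIU : Disjoint I U)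
    (hI : M.rank (I ∪ U) = I.card + M.rank U) :
    M.rank (I ∪ J) = (I ∪ J).card := by
  have hdisj : Disjoint I J := hIU.mono_right hJU
  have hcard : (I ∪ J).card = I.card + J.card := Finset.card_union_of_disjoint hdisj
  have hle : M.rank (I ∪ J) ≤ (I ∪ J).card := M.rank_le_card _
  have hsub := M.rank_submod (I ∪ J) U
  have e1 : (I ∪ J) ∪ U = I ∪ U := by
    rw [Finset.union_assoc, Finset.union_eq_right.mpr hJU]
  have e2 : J ⊆ (I ∪ J) ∩ U := by
    intro x hx; simp; exact ⟨Or.inr hx, hJU hx⟩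
  have hm := M.rank_mono e2
  rw [e1] at hsub
  omega

lemma partition_lemma : ∀ (N : ℕ) (M₁ M₂ : FinMatroid n) (S : Finset (Fin n)),
    S.card ≤ N → (∀ T ⊆ S, T.card ≤ M₁.rank T + M₂.rank T) →
    ∃ I₁ I₂ : Finset (Fin n), Disjoint I₁ I₂ ∧ I₁ ∪ I₂ = S ∧
      M₁.rank I₁ = I₁.card ∧ M₂.rank I₂ = I₂.card := by
  intro N
  induction N with
  | zero =>
    intro M₁ M₂ S hS _
    have hSe : S = ∅ := Finset.card_eq_zero.mp (Nat.le_antisymm hS (Nat.zero_le _))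
    exact ⟨∅, ∅, by simp, by simp [hSe], by simp [M₁.rank_empty], by simp [M₂.rank_empty]⟩
  | succ N IH =>
    intro M₁ M₂ S hS hcond
    rcases S.eq_empty_or_nonempty with rfl | hSne
    · exact ⟨∅, ∅, by simp, by simp, by simp [M₁.rank_empty], by simp [M₂.rank_empty]⟩
    by_cases htight : ∃ U, U ⊆ S ∧ U.Nonempty ∧ U ≠ S ∧ M₁.rank U + M₂.rank U = U.card
    · obtain ⟨U, hUS, hUne, hUneS, hUt⟩ := htight
      have hUc : U.card < S.card := Finset.card_lt_card (ssubset_of_subset_of_ne hUS hUneS)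
      obtain ⟨J₁, J₂, hJd, hJu, hJ1, hJ2⟩ := IH M₁ M₂ U (by omega)
        (fun T hT => hcond T (hT.trans hUS))
      have hcond' : ∀ T ⊆ S \ U, T.card ≤ (M₁.contract U).rank T + (M₂.contract U).rank T := by
        intro T hT
        have hTU : T ∪ U ⊆ S := Finset.union_subset (hT.trans Finset.sdiff_subset) hUS
        have h1 := hcond (T ∪ U) hTU
        have hd : Disjoint T U := Finset.sdiff_disjoint.mono_left hT
        have hc : (T ∪ U).card = T.card + U.card := Finset.card_union_of_disjoint hd
        have c1 := M₁.contract_rank U T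
        have c2 := M₂.contract_rank U T
        omega
      have hSUc : (S \ U).card < S.card := by
        have h1 := Finset.card_sdiff_of_subset hUS
        have h2 := hUne.card_pos
        have h3 := Finset.card_le_card hUS
        omega
      obtain ⟨K₁, K₂, hKd, hKu, hK1, hK2⟩ :=
        IH (M₁.contract U) (M₂.contract U) (S \ U) (by omega) hcond'
      have hK1S : K₁ ⊆ S \ U := hKu ▸ Finset.subset_union_left
      have hK2S : K₂ ⊆ S \ U := hKu ▸ Finset.subset_union_right
      have hJ1U : J₁ ⊆ U := hJu ▸ Finset.subset_union_left
      have hJ2U : J₂ ⊆ U := hJu ▸ Finset.subset_union_right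
      have hK1U : Disjoint K₁ U := Finset.sdiff_disjoint.mono_left hK1S
      have hK2U : Disjoint K₂ U := Finset.sdiff_disjoint.mono_left hK2S
      have c1 := M₁.contract_rank U K₁
      have c2 := M₂.contract_rank U K₂
      refine ⟨K₁ ∪ J₁, K₂ ∪ J₂, ?_, ?_, ?_, ?_⟩
      · refine Finset.disjoint_union_left.mpr ⟨?_, ?_⟩ <;>
          refine Finset.disjoint_union_right.mpr ⟨?_, ?_⟩
        · exact hKd
        · exact hK1U.mono_right hJ2U
        · exact (hK2U.mono_right hJ1U).symm
        · exact hJd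
      · have : (K₁ ∪ J₁) ∪ (K₂ ∪ J₂) = (K₁ ∪ K₂) ∪ (J₁ ∪ J₂) := by
          ext x; simp; tauto
        rw [this, hKu, hJu]
        exact Finset.sdiff_union_of_subset hUS
      · exact M₁.indep_union_of_contract hJ1U hJ1 hK1U (by omega)
      · exact M₂.indep_union_of_contract hJ2U hJ2 hK2U (by omega)
    · push_neg at htight
      obtain ⟨x, hx⟩ := hSne
      have strict : ∀ T ⊆ S, T.Nonempty → T ≠ S → T.card + 1 ≤ M₁.rank T + M₂.rank T := by
        intro T hT hTne hTneS
        have h1 := hcond T hT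
        have h2 := htight T hT hTne hTneS
        omega
      have hSx : (S \ {x}).card < S.card := by
        have h1 := Finset.card_sdiff_of_subset (Finset.singleton_subset_iff.mpr hx)
        have h2 := Finset.card_pos.mpr ⟨x, hx⟩
        simp at h1
        omega
      have hxs : ({x} : Finset (Fin n)) ⊆ S := Finset.singleton_subset_iff.mpr hx
      have hone : 1 ≤ M₁.rank {x} + M₂.rank {x} := by
        have := hcond {x} hxs; simpa using this
      by_cases h2 : 0 < M₂.rank {x}
      · have hx1 : M₂.rank {x} = 1 := by
          have := M₂.rank_le_card {x}; simp at this; omega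
        have hcond' : ∀ T ⊆ S \ {x}, T.card ≤ M₁.rank T + (M₂.contract {x}).rank T := by
          intro T hT
          rcases T.eq_empty_or_nonempty with rfl | hTne
          · simp
          have hTS : T ⊆ S := hT.trans Finset.sdiff_subset
          have hTneS : T ≠ S := by
            intro h; subst h
            exact (Finset.mem_sdiff.mp (hT hx)).2 (by simp)
          have hs := strict T hTS hTne hTneS
          have c := M₂.contract_rank {x} T
          have hmono : M₂.rank T ≤ M₂.rank (T ∪ {x}) := M₂.rank_mono Finset.subset_union_left
          omega
        obtain ⟨K₁, K₂, hKd, hKu, hK1, hK2⟩ :=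
          IH M₁ (M₂.contract {x}) (S \ {x}) (by omega) hcond'
        have c := M₂.contract_rank {x} K₂
        have hK1S : K₁ ⊆ S \ {x} := hKu ▸ Finset.subset_union_left
        have hK2S : K₂ ⊆ S \ {x} := hKu ▸ Finset.subset_union_right
        have hxK1 : x ∉ K₁ := fun hh => (Finset.mem_sdiff.mp (hK1S hh)).2 (by simp)
        have hxK2 : x ∉ K₂ := fun hh => (Finset.mem_sdiff.mp (hK2S hh)).2 (by simp)
        refine ⟨K₁, K₂ ∪ {x}, ?_, ?_, hK1, ?_⟩
        · exact Finset.disjoint_union_right.mpr ⟨hKd, Finset.disjoint_singleton_right.mpr hxK1⟩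
        · rw [← Finset.union_assoc, hKu]
          exact Finset.sdiff_union_of_subset hxs
        · have hcard : (K₂ ∪ {x}).card = K₂.card + 1 := by
            rw [Finset.card_union_of_disjoint (Finset.disjoint_singleton_right.mpr hxK2)]
            simp
          omega
      · have h1 : 0 < M₁.rank {x} := by omega
        have hx1 : M₁.rank {x} = 1 := by
          have := M₁.rank_le_card {x}; simp at this; omega
        have hcond' : ∀ T ⊆ S \ {x}, T.card ≤ (M₁.contract {x}).rank T + M₂.rank T := by
          intro T hT
          rcases T.eq_empty_or_nonempty with rfl | hTne
          · simp
          have hTS : T ⊆ S := hT.trans Finset.sdiff_subset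
          have hTneS : T ≠ S := by
            intro h; subst h
            exact (Finset.mem_sdiff.mp (hT hx)).2 (by simp)
          have hs := strict T hTS hTne hTneS
          have c := M₁.contract_rank {x} T
          have hmono : M₁.rank T ≤ M₁.rank (T ∪ {x}) := M₁.rank_mono Finset.subset_union_left
          omega
        obtain ⟨K₁, K₂, hKd, hKu, hK1, hK2⟩ :=
          IH (M₁.contract {x}) M₂ (S \ {x}) (by omega) hcond'
        have c := M₁.contract_rank {x} K₁
        have hK1S : K₁ ⊆ S \ {x} := hKu ▸ Finset.subset_union_left
        have hK2S : K₂ ⊆ S \ {x} := hKu ▸ Finset.subset_union_right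
        have hxK1 : x ∉ K₁ := fun hh => (Finset.mem_sdiff.mp (hK1S hh)).2 (by simp)
        have hxK2 : x ∉ K₂ := fun hh => (Finset.mem_sdiff.mp (hK2S hh)).2 (by simp)
        refine ⟨K₁ ∪ {x}, K₂, ?_, ?_, ?_, hK2⟩
        · exact Finset.disjoint_union_left.mpr ⟨hKd, Finset.disjoint_singleton_left.mpr hxK2⟩
        · have : (K₁ ∪ {x}) ∪ K₂ = (K₁ ∪ K₂) ∪ {x} := by ext y; simp
          rw [this, hKu]
          exact Finset.sdiff_union_of_subset hxs
        · have hcard : (K₁ ∪ {x}).card = K₁.card + 1 := by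
            rw [Finset.card_union_of_disjoint (Finset.disjoint_singleton_right.mpr hxK1)]
            simp
          omega


lemma rankD_le_card (M₁ M₂ : FinMatroid n) (S : Finset (Fin n)) :
    rankD M₁ M₂ S ≤ S.card := by
  apply Nat.sInf_le
  refine ⟨∅, ⟨by simp [ValidFamily], by simp [famValue]⟩⟩

lemma rankD_le_single (M₁ M₂ : FinMatroid n) {S : Finset (Fin n)} (hS : S.Nonempty) :
    rankD M₁ M₂ S ≤ M₁.rank S + M₂.rank S - 1 := by
  apply Nat.sInf_le
  refine ⟨{S}, ⟨⟨?_, ?_⟩, ?_⟩⟩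
  · intro T hT
    simp at hT
    rw [hT]
    exact ⟨Finset.Subset.refl S, hS⟩
  · intro T hT T' hT' hne
    simp at hT hT'
    subst hT; subst hT'
    exact absurd rfl hne
  · simp [famValue]

end FinMatroid

open FinMatroid in
/-- Every circuit `C` of `D(M₁,M₂)` is a disjoint union `C = I₁ ⊔ I₂` where
`I₁` is a basis of `M₁|C` and `I₂` is a basis of `M₂|C`. -/
theorem circuitD_decomposition (n : ℕ) (M₁ M₂ : FinMatroid n)
    (h : NoCommonLoops M₁ M₂) (C : Finset (Fin n)) (hC : CircuitD M₁ M₂ C) :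
    ∃ I₁ I₂ : Finset (Fin n), Disjoint I₁ I₂ ∧ I₁ ∪ I₂ = C ∧
      M₁.Indep I₁ ∧ M₁.rank I₁ = M₁.rank C ∧
      M₂.Indep I₂ ∧ M₂.rank I₂ = M₂.rank C := by
  classical
  obtain ⟨hdep, hmin⟩ := hC
  -- C is nonempty
  have hCne : C.Nonempty := by
    rcases C.eq_empty_or_nonempty with rfl | hne
    · exact absurd (Nat.le_antisymm (by simpa using rankD_le_card M₁ M₂ ∅) (Nat.zero_le _)) hdep
    · exact hne
  -- singleton ranks
  have hsingle : ∀ T : Finset (Fin n), T.Nonempty → 1 ≤ M₁.rank T + M₂.rank T := by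
    intro T ⟨i, hi⟩
    have h1 : M₁.rank {i} ≤ M₁.rank T := M₁.rank_mono (Finset.singleton_subset_iff.mpr hi)
    have h2 : M₂.rank {i} ≤ M₂.rank T := M₂.rank_mono (Finset.singleton_subset_iff.mpr hi)
    rcases h i with h | h <;> omega
  -- proper nonempty subsets are "overloaded"
  have hproper : ∀ C' : Finset (Fin n), C' ⊂ C → C'.Nonempty →
      C'.card + 1 ≤ M₁.rank C' + M₂.rank C' := by
    intro C' hC' hne
    have hi := hmin C' hC'
    have hle := rankD_le_single M₁ M₂ hne
    unfold IndepD at hi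
    have hpos := hne.card_pos
    omega
  -- rankD C < C.card, get a minimizing family
  have hdlt : rankD M₁ M₂ C < C.card :=
    lt_of_le_of_ne (rankD_le_card M₁ M₂ C) hdep
  have hmem : rankD M₁ M₂ C ∈ {v : ℕ | ∃ 𝒯 : Finset (Finset (Fin n)),
      ValidFamily C 𝒯 ∧ v = famValue M₁ M₂ C 𝒯} :=
    Nat.sInf_mem ⟨C.card, ∅, by simp [ValidFamily], by simp [famValue]⟩
  obtain ⟨𝒯, hvalid, hval⟩ := hmem
  -- the union of the family
  have hsupC : 𝒯.sup id ⊆ C := Finset.sup_le fun T hT => (hvalid.1 T hT).1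
  have hsupcard : (𝒯.sup id).card = ∑ T ∈ 𝒯, T.card := by
    rw [Finset.sup_eq_biUnion]
    exact Finset.card_biUnion fun T hT T' hT' hne => hvalid.2 T hT T' hT' hne
  have hsplit : (C \ 𝒯.sup id).card + (𝒯.sup id).card = C.card := by
    rw [Finset.card_sdiff_of_subset hsupC]
    have := Finset.card_le_card hsupC
    omega
  -- some member T of 𝒯 has r₁ T + r₂ T ≤ T.card
  have hbad : ∃ T ∈ 𝒯, M₁.rank T + M₂.rank T ≤ T.card := by
    by_contra hcon
    push_neg at hcon
    have hsum : ∑ T ∈ 𝒯, T.card ≤ ∑ T ∈ 𝒯, (M₁.rank T + M₂.rank T - 1) := by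
      apply Finset.sum_le_sum
      intro T hT
      have := hcon T hT
      omega
    unfold famValue at hval
    omega
  obtain ⟨T, hT𝒯, hTbad⟩ := hbad
  have hTC : T ⊆ C := (hvalid.1 T hT𝒯).1
  have hTne : T.Nonempty := (hvalid.1 T hT𝒯).2
  have hTeq : T = C := by
    by_contra hne
    have := hproper T (ssubset_of_subset_of_ne hTC hne) hTne
    omega
  subst hTeq
  -- so r₁ C + r₂ C ≤ |C|; now the reverse inequality
  have hge : T.card ≤ M₁.rank T + M₂.rank T := by
    rcases Nat.lt_or_ge T.card 2 with hlt | hge2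
    · have := hsingle T hTne
      omega
    · obtain ⟨x, hx⟩ := hTne
      have hxs : ({x} : Finset (Fin n)) ⊆ T := Finset.singleton_subset_iff.mpr hx
      have hcard : (T \ {x}).card = T.card - 1 := by
        rw [Finset.card_sdiff_of_subset hxs]; simp
      have hssub : T \ {x} ⊂ T :=
        Finset.sdiff_ssubset hxs (by simp)
      have hne' : (T \ {x}).Nonempty := Finset.card_pos.mp (by omega)
      have h1 := hproper (T \ {x}) hssub hne'
      have m1 : M₁.rank (T \ {x}) ≤ M₁.rank T := M₁.rank_mono Finset.sdiff_subset
      have m2 : M₂.rank (T \ {x}) ≤ M₂.rank T := M₂.rank_mono Finset.sdiff_subset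
      omega
  have heq : M₁.rank T + M₂.rank T = T.card := le_antisymm hTbad hge
  -- apply the partition lemma
  obtain ⟨I₁, I₂, hd, hu, h1, h2⟩ := partition_lemma T.card M₁ M₂ T le_rfl (by
    intro T' hT'
    rcases T'.eq_empty_or_nonempty with rfl | hT'ne
    · simp
    by_cases hfull : T' = T
    · subst hfull; omega
    · have := hproper T' (ssubset_of_subset_of_ne hT' hfull) hT'ne
      omega)
  have hI1 : I₁ ⊆ T := hu ▸ Finset.subset_union_left
  have hI2 : I₂ ⊆ T := hu ▸ Finset.subset_union_right
  have hm1 : M₁.rank I₁ ≤ M₁.rank T := M₁.rank_mono hI1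
  have hm2 : M₂.rank I₂ ≤ M₂.rank T := M₂.rank_mono hI2
  have hcards : I₁.card + I₂.card = T.card := by
    rw [← Finset.card_union_of_disjoint hd, hu]
  exact ⟨I₁, I₂, hd, hu, h1, by omega, h2, by omega⟩
end

section
/- If M_1, M_2 are matroids on a ground set E and N_1, N_2 are matroids on a disjoint ground set E' (with neither pair having common loops), then D(M_1 ⊕ N_1, M_2 ⊕ N_2) = D(M_1,M_2) ⊕ D(N_1,N_2), where ⊕ denotes matroid direct sum. -/
open Finset

namespace FinMatroid
variable {n : ℕ}

lemma validFamily_empty (S : Finset (Fin n)) :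
    ValidFamily S (∅ : Finset (Finset (Fin n))) := by
  constructor <;> simp [ValidFamily]

lemma rankD_le_famValue (M₁ M₂ : FinMatroid n) {S : Finset (Fin n)}
    {𝒯 : Finset (Finset (Fin n))} (h : ValidFamily S 𝒯) :
    rankD M₁ M₂ S ≤ famValue M₁ M₂ S 𝒯 :=
  Nat.sInf_le (show famValue M₁ M₂ S 𝒯 ∈ {v : ℕ | ∃ 𝒯', ValidFamily S 𝒯' ∧ v = famValue M₁ M₂ S 𝒯'} from ⟨𝒯, h, rfl⟩)

lemma exists_rankD_eq (M₁ M₂ : FinMatroid n) (S : Finset (Fin n)) :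
    ∃ 𝒯, ValidFamily S 𝒯 ∧ rankD M₁ M₂ S = famValue M₁ M₂ S 𝒯 :=
  Nat.sInf_mem (⟨famValue M₁ M₂ S ∅, ∅, validFamily_empty S, rfl⟩ :
    {v : ℕ | ∃ 𝒯, ValidFamily S 𝒯 ∧ v = famValue M₁ M₂ S 𝒯}.Nonempty)

lemma sup_image_inter (𝒯 : Finset (Finset (Fin n))) (E : Finset (Fin n)) :
    ((𝒯.filter fun T => (T ∩ E).Nonempty).image (· ∩ E)).sup id = 𝒯.sup id ∩ E := by
  ext x
  simp only [Finset.mem_sup, Finset.mem_image, Finset.mem_filter, Finset.mem_inter, id]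
  constructor
  · rintro ⟨S, ⟨T, ⟨hT, -⟩, rfl⟩, hx⟩
    rw [Finset.mem_inter] at hx
    exact ⟨⟨T, hT, hx.1⟩, hx.2⟩
  · rintro ⟨⟨T, hT, hxT⟩, hxE⟩
    exact ⟨T ∩ E, ⟨T, ⟨hT, ⟨x, Finset.mem_inter.2 ⟨hxT, hxE⟩⟩⟩, rfl⟩,
      Finset.mem_inter.2 ⟨hxT, hxE⟩⟩

end FinMatroid


open FinMatroid in
/-- `D(M₁ ⊕ N₁, M₂ ⊕ N₂) = D(M₁,M₂) ⊕ D(N₁,N₂)` for matroids `M₁,M₂` on the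
ground set `E` and `N₁,N₂` on the disjoint ground set `E'` (all embedded in
`Fin n`, with elements outside their ground set being loops), where `P₁, P₂`
are the direct sums `M₁ ⊕ N₁` and `M₂ ⊕ N₂`. -/
theorem rankD_directSum (n : ℕ) (E E' : Finset (Fin n))
    (hdisj : Disjoint E E') (hcover : E ∪ E' = Finset.univ)
    (M₁ M₂ N₁ N₂ P₁ P₂ : FinMatroid n)
    (hM₁ : ∀ A : Finset (Fin n), M₁.rank A = M₁.rank (A ∩ E))
    (hM₂ : ∀ A : Finset (Fin n), M₂.rank A = M₂.rank (A ∩ E))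
    (hN₁ : ∀ A : Finset (Fin n), N₁.rank A = N₁.rank (A ∩ E'))
    (hN₂ : ∀ A : Finset (Fin n), N₂.rank A = N₂.rank (A ∩ E'))
    (hME : ∀ i ∈ E, 0 < M₁.rank {i} ∨ 0 < M₂.rank {i})
    (hNE : ∀ i ∈ E', 0 < N₁.rank {i} ∨ 0 < N₂.rank {i})
    (hP₁ : ∀ A : Finset (Fin n), P₁.rank A = M₁.rank (A ∩ E) + N₁.rank (A ∩ E'))
    (hP₂ : ∀ A : Finset (Fin n), P₂.rank A = M₂.rank (A ∩ E) + N₂.rank (A ∩ E')) :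
    ∀ A : Finset (Fin n),
      rankD P₁ P₂ A = rankD M₁ M₂ (A ∩ E) + rankD N₁ N₂ (A ∩ E') := by
  intro A
  have hEE' : ∀ i : Fin n, i ∈ E ∨ i ∈ E' := by
    intro i
    have : i ∈ E ∪ E' := hcover ▸ Finset.mem_univ i
    simpa [Finset.mem_union] using this
  have hdE : ∀ i : Fin n, i ∈ E → i ∉ E' := fun i hi => Finset.disjoint_left.mp hdisj hi
  apply le_antisymm
  · -- ≤ : combine optimal families for the two parts
    obtain ⟨𝒯₁, hv₁, he₁⟩ := FinMatroid.exists_rankD_eq M₁ M₂ (A ∩ E)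
    obtain ⟨𝒯₂, hv₂, he₂⟩ := FinMatroid.exists_rankD_eq N₁ N₂ (A ∩ E')
    have hsub₁ : ∀ T ∈ 𝒯₁, T ⊆ A ∩ E := fun T hT => (hv₁.1 T hT).1
    have hsub₂ : ∀ T ∈ 𝒯₂, T ⊆ A ∩ E' := fun T hT => (hv₂.1 T hT).1
    have hd12 : Disjoint 𝒯₁ 𝒯₂ := by
      rw [Finset.disjoint_left]
      intro T hT1 hT2
      obtain ⟨x, hx⟩ := (hv₁.1 T hT1).2
      exact hdE x (Finset.mem_inter.mp (hsub₁ T hT1 hx)).2 (Finset.mem_inter.mp (hsub₂ T hT2 hx)).2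
    have hvalid : ValidFamily A (𝒯₁ ∪ 𝒯₂) := by
      constructor
      · intro T hT
        rcases Finset.mem_union.mp hT with h | h
        · exact ⟨(hsub₁ T h).trans Finset.inter_subset_left, (hv₁.1 T h).2⟩
        · exact ⟨(hsub₂ T h).trans Finset.inter_subset_left, (hv₂.1 T h).2⟩
      · intro T hT T' hT' hne
        rcases Finset.mem_union.mp hT with h | h <;> rcases Finset.mem_union.mp hT' with h' | h'
        · exact hv₁.2 T h T' h' hne
        · exact (hdisj.mono ((hsub₁ T h).trans Finset.inter_subset_right)
            ((hsub₂ T' h').trans Finset.inter_subset_right))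
        · exact (hdisj.mono ((hsub₁ T' h').trans Finset.inter_subset_right)
            ((hsub₂ T h).trans Finset.inter_subset_right)).symm
        · exact hv₂.2 T h T' h' hne
    calc rankD P₁ P₂ A ≤ famValue P₁ P₂ A (𝒯₁ ∪ 𝒯₂) :=
          FinMatroid.rankD_le_famValue P₁ P₂ hvalid
      _ = famValue M₁ M₂ (A ∩ E) 𝒯₁ + famValue N₁ N₂ (A ∩ E') 𝒯₂ := by
          unfold FinMatroid.famValue
          rw [Finset.sum_union hd12]
          have hs1 : ∀ T ∈ 𝒯₁, P₁.rank T + P₂.rank T - 1 = M₁.rank T + M₂.rank T - 1 := by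
            intro T hT
            have hTE : T ∩ E = T := Finset.inter_eq_left.mpr
              ((hsub₁ T hT).trans Finset.inter_subset_right)
            have hTE' : T ∩ E' = ∅ := by
              rw [← Finset.disjoint_iff_inter_eq_empty]
              exact hdisj.mono_left ((hsub₁ T hT).trans Finset.inter_subset_right)
            rw [hP₁, hP₂, hTE, hTE', N₁.rank_empty, N₂.rank_empty]
            omega
          have hs2 : ∀ T ∈ 𝒯₂, P₁.rank T + P₂.rank T - 1 = N₁.rank T + N₂.rank T - 1 := by
            intro T hT
            have hTE' : T ∩ E' = T := Finset.inter_eq_left.mpr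
              ((hsub₂ T hT).trans Finset.inter_subset_right)
            have hTE : T ∩ E = ∅ := by
              rw [← Finset.disjoint_iff_inter_eq_empty]
              exact hdisj.symm.mono_left ((hsub₂ T hT).trans Finset.inter_subset_right)
            rw [hP₁, hP₂, hTE, hTE', M₁.rank_empty, M₂.rank_empty]
            omega
          rw [Finset.sum_congr rfl hs1, Finset.sum_congr rfl hs2]
          have hU1 : 𝒯₁.sup id ⊆ E := Finset.sup_le fun T hT =>
            (hsub₁ T hT).trans Finset.inter_subset_right
          have hU2 : 𝒯₂.sup id ⊆ E' := Finset.sup_le fun T hT =>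
            (hsub₂ T hT).trans Finset.inter_subset_right
          have hsplit : A \ (𝒯₁ ∪ 𝒯₂).sup id
              = ((A ∩ E) \ 𝒯₁.sup id) ∪ ((A ∩ E') \ 𝒯₂.sup id) := by
            rw [Finset.sup_union]
            ext x
            simp only [Finset.mem_sdiff, Finset.mem_union, Finset.mem_inter, sup_eq_union]
            constructor
            · rintro ⟨hxA, hx⟩
              push_neg at hx
              rcases hEE' x with h | h
              · exact Or.inl ⟨⟨hxA, h⟩, hx.1⟩
              · exact Or.inr ⟨⟨hxA, h⟩, hx.2⟩
            · rintro (⟨⟨hxA, hxE⟩, hx⟩ | ⟨⟨hxA, hxE⟩, hx⟩)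
              · exact ⟨hxA, fun h => h.elim hx (fun h2 => hdE x hxE (hU2 h2))⟩
              · exact ⟨hxA, fun h => h.elim (fun h1 => hdE x (hU1 h1) hxE) hx⟩
          rw [hsplit, Finset.card_union_of_disjoint
            (hdisj.mono (Finset.sdiff_subset.trans Finset.inter_subset_right)
              (Finset.sdiff_subset.trans Finset.inter_subset_right))]
          ring
      _ = rankD M₁ M₂ (A ∩ E) + rankD N₁ N₂ (A ∩ E') := by rw [he₁, he₂]
  · -- ≥ : split an optimal family for the whole
    obtain ⟨𝒯, hv, he⟩ := FinMatroid.exists_rankD_eq P₁ P₂ A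
    set 𝒯₁ : Finset (Finset (Fin n)) :=
      (𝒯.filter fun T => (T ∩ E).Nonempty).image (· ∩ E) with h𝒯₁
    set 𝒯₂ : Finset (Finset (Fin n)) :=
      (𝒯.filter fun T => (T ∩ E').Nonempty).image (· ∩ E') with h𝒯₂
    have hvalid₁ : ValidFamily (A ∩ E) 𝒯₁ := by
      constructor
      · intro S hS
        rw [h𝒯₁, Finset.mem_image] at hS
        obtain ⟨T, hT, rfl⟩ := hS
        rw [Finset.mem_filter] at hT
        exact ⟨Finset.inter_subset_inter_right (hv.1 T hT.1).1, hT.2⟩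
      · intro S hS S' hS' hne
        rw [h𝒯₁, Finset.mem_image] at hS hS'
        obtain ⟨T, hT, rfl⟩ := hS
        obtain ⟨T', hT', rfl⟩ := hS'
        rw [Finset.mem_filter] at hT hT'
        have : T ≠ T' := fun h => hne (by rw [h])
        exact (hv.2 T hT.1 T' hT'.1 this).mono Finset.inter_subset_left
          Finset.inter_subset_left
    have hvalid₂ : ValidFamily (A ∩ E') 𝒯₂ := by
      constructor
      · intro S hS
        rw [h𝒯₂, Finset.mem_image] at hS
        obtain ⟨T, hT, rfl⟩ := hS
        rw [Finset.mem_filter] at hT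
        exact ⟨Finset.inter_subset_inter_right (hv.1 T hT.1).1, hT.2⟩
      · intro S hS S' hS' hne
        rw [h𝒯₂, Finset.mem_image] at hS hS'
        obtain ⟨T, hT, rfl⟩ := hS
        obtain ⟨T', hT', rfl⟩ := hS'
        rw [Finset.mem_filter] at hT hT'
        have : T ≠ T' := fun h => hne (by rw [h])
        exact (hv.2 T hT.1 T' hT'.1 this).mono Finset.inter_subset_left
          Finset.inter_subset_left
    have hinj₁ : ∀ T ∈ 𝒯.filter (fun T => (T ∩ E).Nonempty),
        ∀ T' ∈ 𝒯.filter (fun T => (T ∩ E).Nonempty), T ∩ E = T' ∩ E → T = T' := by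
      intro T hT T' hT' heq
      rw [Finset.mem_filter] at hT hT'
      by_contra hne
      have hd := hv.2 T hT.1 T' hT'.1 hne
      obtain ⟨x, hx⟩ := hT.2
      have hx' : x ∈ T' ∩ E := heq ▸ hx
      exact Finset.disjoint_left.mp hd (Finset.mem_inter.mp hx).1
        (Finset.mem_inter.mp hx').1
    have hinj₂ : ∀ T ∈ 𝒯.filter (fun T => (T ∩ E').Nonempty),
        ∀ T' ∈ 𝒯.filter (fun T => (T ∩ E').Nonempty), T ∩ E' = T' ∩ E' → T = T' := by
      intro T hT T' hT' heq
      rw [Finset.mem_filter] at hT hT'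
      by_contra hne
      have hd := hv.2 T hT.1 T' hT'.1 hne
      obtain ⟨x, hx⟩ := hT.2
      have hx' : x ∈ T' ∩ E' := heq ▸ hx
      exact Finset.disjoint_left.mp hd (Finset.mem_inter.mp hx).1
        (Finset.mem_inter.mp hx').1
    have hsum₁ : ∑ S ∈ 𝒯₁, (M₁.rank S + M₂.rank S - 1)
        = ∑ T ∈ 𝒯, (if (T ∩ E).Nonempty then M₁.rank (T ∩ E) + M₂.rank (T ∩ E) - 1 else 0) := by
      rw [h𝒯₁, Finset.sum_image hinj₁, Finset.sum_filter]
    have hsum₂ : ∑ S ∈ 𝒯₂, (N₁.rank S + N₂.rank S - 1)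
        = ∑ T ∈ 𝒯, (if (T ∩ E').Nonempty then N₁.rank (T ∩ E') + N₂.rank (T ∩ E') - 1 else 0) := by
      rw [h𝒯₂, Finset.sum_image hinj₂, Finset.sum_filter]
    have hpoint : ∀ T ∈ 𝒯,
        (if (T ∩ E).Nonempty then M₁.rank (T ∩ E) + M₂.rank (T ∩ E) - 1 else 0)
        + (if (T ∩ E').Nonempty then N₁.rank (T ∩ E') + N₂.rank (T ∩ E') - 1 else 0)
        ≤ P₁.rank T + P₂.rank T - 1 := by
      intro T hT
      rw [hP₁, hP₂]
      by_cases h1 : (T ∩ E).Nonempty <;> by_cases h2 : (T ∩ E').Nonempty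
      · have ha : 1 ≤ M₁.rank (T ∩ E) + M₂.rank (T ∩ E) := by
          obtain ⟨x, hx⟩ := h1
          have hxE : x ∈ E := (Finset.mem_inter.mp hx).2
          have hs : ({x} : Finset (Fin n)) ⊆ T ∩ E := Finset.singleton_subset_iff.mpr hx
          rcases hME x hxE with h | h
          · calc 1 ≤ M₁.rank {x} := h
              _ ≤ M₁.rank (T ∩ E) := M₁.rank_mono hs
              _ ≤ _ := Nat.le_add_right _ _
          · calc 1 ≤ M₂.rank {x} := h
              _ ≤ M₂.rank (T ∩ E) := M₂.rank_mono hs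
              _ ≤ _ := Nat.le_add_left _ _
        have hb : 1 ≤ N₁.rank (T ∩ E') + N₂.rank (T ∩ E') := by
          obtain ⟨x, hx⟩ := h2
          have hxE : x ∈ E' := (Finset.mem_inter.mp hx).2
          have hs : ({x} : Finset (Fin n)) ⊆ T ∩ E' := Finset.singleton_subset_iff.mpr hx
          rcases hNE x hxE with h | h
          · calc 1 ≤ N₁.rank {x} := h
              _ ≤ N₁.rank (T ∩ E') := N₁.rank_mono hs
              _ ≤ _ := Nat.le_add_right _ _
          · calc 1 ≤ N₂.rank {x} := h
              _ ≤ N₂.rank (T ∩ E') := N₂.rank_mono hs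
              _ ≤ _ := Nat.le_add_left _ _
        simp only [if_pos h1, if_pos h2]
        omega
      · simp only [if_pos h1, if_neg h2]
        rw [Finset.not_nonempty_iff_eq_empty.mp h2, N₁.rank_empty, N₂.rank_empty]
        omega
      · simp only [if_neg h1, if_pos h2]
        rw [Finset.not_nonempty_iff_eq_empty.mp h1, M₁.rank_empty, M₂.rank_empty]
        omega
      · simp only [if_neg h1, if_neg h2]
        omega
    have hcardsplit : ((A ∩ E) \ 𝒯₁.sup id).card + ((A ∩ E') \ 𝒯₂.sup id).card
        = (A \ 𝒯.sup id).card := by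
      rw [h𝒯₁, h𝒯₂, FinMatroid.sup_image_inter, FinMatroid.sup_image_inter]
      have e1 : (A ∩ E) \ (𝒯.sup id ∩ E) = (A \ 𝒯.sup id) ∩ E := by
        ext x
        simp only [Finset.mem_sdiff, Finset.mem_inter]
        tauto
      have e2 : (A ∩ E') \ (𝒯.sup id ∩ E') = (A \ 𝒯.sup id) ∩ E' := by
        ext x
        simp only [Finset.mem_sdiff, Finset.mem_inter]
        tauto
      rw [e1, e2, ← Finset.card_union_of_disjoint
        (hdisj.mono Finset.inter_subset_right Finset.inter_subset_right),
        ← Finset.inter_union_distrib_left, hcover, Finset.inter_univ]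
    calc rankD M₁ M₂ (A ∩ E) + rankD N₁ N₂ (A ∩ E')
        ≤ famValue M₁ M₂ (A ∩ E) 𝒯₁ + famValue N₁ N₂ (A ∩ E') 𝒯₂ :=
          Nat.add_le_add (FinMatroid.rankD_le_famValue M₁ M₂ hvalid₁)
            (FinMatroid.rankD_le_famValue N₁ N₂ hvalid₂)
      _ ≤ famValue P₁ P₂ A 𝒯 := by
          unfold FinMatroid.famValue
          rw [hsum₁, hsum₂]
          have : (∑ T ∈ 𝒯, (if (T ∩ E).Nonempty then M₁.rank (T ∩ E) + M₂.rank (T ∩ E) - 1 else 0))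
              + (∑ T ∈ 𝒯, (if (T ∩ E').Nonempty then N₁.rank (T ∩ E') + N₂.rank (T ∩ E') - 1 else 0))
              ≤ ∑ T ∈ 𝒯, (P₁.rank T + P₂.rank T - 1) := by
            rw [← Finset.sum_add_distrib]
            exact Finset.sum_le_sum hpoint
          omega
      _ = rankD P₁ P₂ A := he.symm
end
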